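/- Exponential decay of the moisture L² norm: the mixing ratio component q of any strong solution of the moist primitive equations satisfies ‖q(t)‖₂² ≤ ‖q₀‖₂² exp(−t/(2Rt₄ + 2/β)) + (2Rt₄ + 2/β)² ‖Q₂‖₂² for all t ≥ 0, where Q₂ ∈ L²(Ω) is the moisture source. -/

import Mathlib

open MeasureTheory Set

/-- Euclidean norm of a vector in `ℝ²`. -/
noncomputable def enorm2 (u : ℝ × ℝ) : ℝ := Real.sqrt (u.1 ^ 2 + u.2 ^ 2)

/-- Euclidean dot product on `ℝ²`. -/
def dot2 (u w : ℝ × ℝ) : ℝ := u.1 * w.1 + u.2 * w.2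

/-- Horizontal divergence `∂_x v₁ + ∂_y v₂` at horizontal point `xy`, height `z`. -/
noncomputable def hdivAt (v : (ℝ × ℝ) × ℝ → ℝ × ℝ) (xy : ℝ × ℝ) (z : ℝ) : ℝ :=
  fderiv ℝ (fun y : ℝ × ℝ => (v (y, z)).1) xy (1, 0) +
    fderiv ℝ (fun y : ℝ × ℝ => (v (y, z)).2) xy (0, 1)

/-- Horizontal gradient of a scalar field at fixed height, as a vector in `ℝ²`. -/
noncomputable def hgradAt (f : (ℝ × ℝ) × ℝ → ℝ) (xy : ℝ × ℝ) (z : ℝ) : ℝ × ℝ :=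
  (fderiv ℝ (fun y : ℝ × ℝ => f (y, z)) xy (1, 0),
    fderiv ℝ (fun y : ℝ × ℝ => f (y, z)) xy (0, 1))

/-- Horizontal Laplacian `∂_x² f + ∂_y² f` of a scalar field at fixed height. -/
noncomputable def hlapAt (f : (ℝ × ℝ) × ℝ → ℝ) (xy : ℝ × ℝ) (z : ℝ) : ℝ :=
  fderiv ℝ (fun y : ℝ × ℝ => fderiv ℝ (fun y' : ℝ × ℝ => f (y', z)) y (1, 0)) xy (1, 0) +
    fderiv ℝ (fun y : ℝ × ℝ => fderiv ℝ (fun y' : ℝ × ℝ => f (y', z)) y (0, 1)) xy (0, 1)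

/-- Vertical derivative of a scalar field on the cylinder. -/
noncomputable def dzAt (f : (ℝ × ℝ) × ℝ → ℝ) (p : (ℝ × ℝ) × ℝ) : ℝ :=
  deriv (fun t : ℝ => f (p.1, t)) p.2

/-- Second vertical derivative of a scalar field on the cylinder. -/
noncomputable def dzzAt (f : (ℝ × ℝ) × ℝ → ℝ) (p : (ℝ × ℝ) × ℝ) : ℝ :=
  deriv (fun t : ℝ => dzAt f (p.1, t)) p.2

/-- Vertical derivative of a vector field on the cylinder. -/
noncomputable def dzV (v : (ℝ × ℝ) × ℝ → ℝ × ℝ) (p : (ℝ × ℝ) × ℝ) : ℝ × ℝ :=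
  deriv (fun t : ℝ => v (p.1, t)) p.2

/-- Squared magnitude of the horizontal gradient of a vector field. -/
noncomputable def hgrad2V (V : (ℝ × ℝ) × ℝ → ℝ × ℝ) (p : (ℝ × ℝ) × ℝ) : ℝ :=
  (enorm2 (fderiv ℝ (fun xy : ℝ × ℝ => V (xy, p.2)) p.1 (1, 0))) ^ 2 +
    (enorm2 (fderiv ℝ (fun xy : ℝ × ℝ => V (xy, p.2)) p.1 (0, 1))) ^ 2

/-- The diagnostic vertical velocity `w(x,y,z) = −∫₀^z ∇·v dζ`. -/
noncomputable def wAt (v : (ℝ × ℝ) × ℝ → ℝ × ℝ) (p : (ℝ × ℝ) × ℝ) : ℝ :=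
  -∫ ζ in (0 : ℝ)..p.2, hdivAt v p.1 ζ

/-- The pressure profile `p(z) = (P − p₀) z + p₀`. -/
noncomputable def prz (P p₀ z : ℝ) : ℝ := (P - p₀) * z + p₀

/-- A (smooth, strong) solution of the reformulated three-dimensional viscous primitive
equations of the large-scale moist atmosphere (2.4)–(2.12) on `Ω = M × (0,1)`,
with the boundary conditions (2.7)–(2.9); the lateral boundary conditions
(`v·n = 0`, `∂T/∂n = 0`, `∂q/∂n = 0`, `∂v/∂n × n = 0`) are encoded weakly via
the divergence theorem and the associated Green identities. -/
structure IsPEStrongSolution (M : Set (ℝ × ℝ))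
    (a b P p₀ fc Ro Re₁ Re₂ Rt₁ Rt₂ Rt₃ Rt₄ α β : ℝ)
    (Q₁ Q₂ : (ℝ × ℝ) × ℝ → ℝ)
    (v : ℝ → (ℝ × ℝ) × ℝ → ℝ × ℝ) (T q : ℝ → (ℝ × ℝ) × ℝ → ℝ)
    (Φs : ℝ → ℝ × ℝ → ℝ) : Prop where
  smooth_v : ContDiff ℝ (⊤ : ℕ∞) (fun tp : ℝ × ((ℝ × ℝ) × ℝ) => v tp.1 tp.2)
  smooth_T : ContDiff ℝ (⊤ : ℕ∞) (fun tp : ℝ × ((ℝ × ℝ) × ℝ) => T tp.1 tp.2)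
  smooth_q : ContDiff ℝ (⊤ : ℕ∞) (fun tp : ℝ × ((ℝ × ℝ) × ℝ) => q tp.1 tp.2)
  smooth_Φ : ContDiff ℝ (⊤ : ℕ∞) (fun tp : ℝ × (ℝ × ℝ) => Φs tp.1 tp.2)
  momentum : ∀ t : ℝ, ∀ p ∈ M ×ˢ Ioo (0 : ℝ) 1,
    deriv (fun s : ℝ => v s p) t
      + fderiv ℝ (fun xy : ℝ × ℝ => v t (xy, p.2)) p.1 (v t p)
      + (wAt (v t) p) • dzV (v t) p
      + (fderiv ℝ (Φs t) p.1 (1, 0), fderiv ℝ (Φs t) p.1 (0, 1))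
      + (fc / Ro) • (-(v t p).2, (v t p).1)
      - (1 / Re₁) • (hlapAt (fun p' => (v t p').1) p.1 p.2,
          hlapAt (fun p' => (v t p').2) p.1 p.2)
      - (1 / Re₂) • (dzzAt (fun p' => (v t p').1) p, dzzAt (fun p' => (v t p').2) p)
      - (∫ ζ in (0 : ℝ)..p.2, (b * P / prz P p₀ ζ) •
          hgradAt (fun p' => (1 + a * q t p') * T t p') p.1 ζ) = 0
  temperature : ∀ t : ℝ, ∀ p ∈ M ×ˢ Ioo (0 : ℝ) 1,
    deriv (fun s : ℝ => T s p) t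
      + dot2 (hgradAt (T t) p.1 p.2) (v t p)
      + wAt (v t) p * dzAt (T t) p
      - (b * P / prz P p₀ p.2) * (1 + a * q t p) * wAt (v t) p
      - (1 / Rt₁) * hlapAt (T t) p.1 p.2 - (1 / Rt₂) * dzzAt (T t) p = Q₁ p
  moisture : ∀ t : ℝ, ∀ p ∈ M ×ˢ Ioo (0 : ℝ) 1,
    deriv (fun s : ℝ => q s p) t
      + dot2 (hgradAt (q t) p.1 p.2) (v t p)
      + wAt (v t) p * dzAt (q t) p
      - (1 / Rt₃) * hlapAt (q t) p.1 p.2 - (1 / Rt₄) * dzzAt (q t) p = Q₂ p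
  baro : ∀ t : ℝ, ∀ xy ∈ M, (∫ ζ in (0 : ℝ)..1, hdivAt (v t) xy ζ) = 0
  bc_v_top : ∀ t : ℝ, ∀ xy ∈ M, dzV (v t) (xy, 1) = 0
  bc_v_bot : ∀ t : ℝ, ∀ xy ∈ M, dzV (v t) (xy, 0) = 0
  bc_T_top : ∀ t : ℝ, ∀ xy ∈ M, (1 / Rt₂) * dzAt (T t) (xy, 1) + α * T t (xy, 1) = 0
  bc_T_bot : ∀ t : ℝ, ∀ xy ∈ M, dzAt (T t) (xy, 0) = 0
  bc_q_top : ∀ t : ℝ, ∀ xy ∈ M, (1 / Rt₄) * dzAt (q t) (xy, 1) + β * q t (xy, 1) = 0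
  bc_q_bot : ∀ t : ℝ, ∀ xy ∈ M, dzAt (q t) (xy, 0) = 0
  lat_v_tangent : ∀ t z : ℝ, ∀ φ : ℝ × ℝ → ℝ, ContDiff ℝ 1 φ →
    (∫ xy in M, (fderiv ℝ (fun y : ℝ × ℝ => φ y * (v t (y, z)).1) xy (1, 0) +
      fderiv ℝ (fun y : ℝ × ℝ => φ y * (v t (y, z)).2) xy (0, 1))) = 0
  lat_T_neumann : ∀ t z : ℝ, ∀ φ : ℝ × ℝ → ℝ, ContDiff ℝ 1 φ →
    (∫ xy in M, (fderiv ℝ (fun y : ℝ × ℝ => φ y * (hgradAt (T t) y z).1) xy (1, 0) +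
      fderiv ℝ (fun y : ℝ × ℝ => φ y * (hgradAt (T t) y z).2) xy (0, 1))) = 0
  lat_q_neumann : ∀ t z : ℝ, ∀ φ : ℝ × ℝ → ℝ, ContDiff ℝ 1 φ →
    (∫ xy in M, (fderiv ℝ (fun y : ℝ × ℝ => φ y * (hgradAt (q t) y z).1) xy (1, 0) +
      fderiv ℝ (fun y : ℝ × ℝ => φ y * (hgradAt (q t) y z).2) xy (0, 1))) = 0
  lat_v_green : ∀ t z : ℝ,
    (∫ xy in M, dot2 (hlapAt (fun p' => (v t p').1) xy z,
        hlapAt (fun p' => (v t p').2) xy z) (v t (xy, z))) =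
      -∫ xy in M, hgrad2V (v t) (xy, z)

/-- `H = (L²)⁴` norm squared of a state `(v, T, q)` on `Ω = M × (0,1)`. -/
noncomputable def Hnorm2 (M : Set (ℝ × ℝ)) (v : (ℝ × ℝ) × ℝ → ℝ × ℝ)
    (T q : (ℝ × ℝ) × ℝ → ℝ) : ℝ :=
  (∫ p in M ×ˢ Ioo (0 : ℝ) 1, (enorm2 (v p)) ^ 2) +
    (∫ p in M ×ˢ Ioo (0 : ℝ) 1, (T p) ^ 2) +
    ∫ p in M ×ˢ Ioo (0 : ℝ) 1, (q p) ^ 2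

/-- The `V₁`-norm squared of the velocity,
`‖v‖² = (1/Re₁)‖∇v‖₂² + (1/Re₂)‖∂_z v‖₂²`. -/
noncomputable def VnormV2 (M : Set (ℝ × ℝ)) (Re₁ Re₂ : ℝ)
    (v : (ℝ × ℝ) × ℝ → ℝ × ℝ) : ℝ :=
  (1 / Re₁) * (∫ p in M ×ˢ Ioo (0 : ℝ) 1, hgrad2V v p) +
    (1 / Re₂) * ∫ p in M ×ˢ Ioo (0 : ℝ) 1, (enorm2 (dzV v p)) ^ 2

/-- The `V₂`/`V₃`-norm squared of a scalar,
`(1/c₁)‖∇u‖₂² + (1/c₂)‖∂_z u‖₂² + γ ∫_M |u(z=1)|²`. -/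
noncomputable def VnormS2 (M : Set (ℝ × ℝ)) (c₁ c₂ γ : ℝ)
    (u : (ℝ × ℝ) × ℝ → ℝ) : ℝ :=
  (1 / c₁) * (∫ p in M ×ˢ Ioo (0 : ℝ) 1, (enorm2 (hgradAt u p.1 p.2)) ^ 2) +
    (1 / c₂) * (∫ p in M ×ˢ Ioo (0 : ℝ) 1, (dzAt u p) ^ 2) +
    γ * ∫ xy in M, (u (xy, 1)) ^ 2

/-- `H²(Ω)` norm squared of an `ℝ²`-valued field. -/
noncomputable def H2normV (M : Set (ℝ × ℝ)) (u : (ℝ × ℝ) × ℝ → ℝ × ℝ) : ℝ :=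
  ∫ p in M ×ˢ Ioo (0 : ℝ) 1,
    (‖u p‖ ^ 2 + ‖iteratedFDeriv ℝ 1 u p‖ ^ 2 + ‖iteratedFDeriv ℝ 2 u p‖ ^ 2)

/-- `H²(Ω)` norm squared of a scalar field. -/
noncomputable def H2normS (M : Set (ℝ × ℝ)) (u : (ℝ × ℝ) × ℝ → ℝ) : ℝ :=
  ∫ p in M ×ˢ Ioo (0 : ℝ) 1,
    (‖u p‖ ^ 2 + ‖iteratedFDeriv ℝ 1 u p‖ ^ 2 + ‖iteratedFDeriv ℝ 2 u p‖ ^ 2)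

section Slice
variable {E F G : Type*} [NormedAddCommGroup E] [NormedSpace ℝ E]
  [NormedAddCommGroup F] [NormedSpace ℝ F] [NormedAddCommGroup G] [NormedSpace ℝ G]

lemma fderiv_slice_left {f : E × F → G} (hf : Differentiable ℝ f) (z : F) (xy : E) (u : E) :
    fderiv ℝ (fun y : E => f (y, z)) xy u = fderiv ℝ f (xy, z) (u, 0) := by
  have h := ((hf (xy, z)).hasFDerivAt).comp xy
    (((hasFDerivAt_id xy).prodMk (hasFDerivAt_const z xy)) :
      HasFDerivAt (fun y : E => (y, z)) ((ContinuousLinearMap.id ℝ E).prod 0) xy)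
  have h' : HasFDerivAt (fun y : E => f (y, z))
      ((fderiv ℝ f (xy, z)).comp ((ContinuousLinearMap.id ℝ E).prod 0)) xy := h
  rw [h'.fderiv]; simp

lemma hasDerivAt_slice_right {f : E × ℝ → G} (hf : Differentiable ℝ f) (x : E) (z : ℝ) :
    HasDerivAt (fun s : ℝ => f (x, s)) (fderiv ℝ f (x, z) (0, 1)) z := by
  have h := ((hf (x, z)).hasFDerivAt).comp_hasDerivAt z
    ((hasDerivAt_const z x).prodMk (hasDerivAt_id z))
  simpa [Function.comp_def] using h

lemma deriv_slice_right {f : E × ℝ → G} (hf : Differentiable ℝ f) (x : E) (z : ℝ) :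
    deriv (fun s : ℝ => f (x, s)) z = fderiv ℝ f (x, z) (0, 1) :=
  (hasDerivAt_slice_right hf x z).deriv

lemma hasDerivAt_slice_left {f : ℝ × F → G} (hf : Differentiable ℝ f) (p : F) (t : ℝ) :
    HasDerivAt (fun s : ℝ => f (s, p)) (fderiv ℝ f (t, p) (1, 0)) t := by
  have h := ((hf (t, p)).hasFDerivAt).comp_hasDerivAt t
    ((hasDerivAt_id t).prodMk (hasDerivAt_const t p))
  simpa [Function.comp_def] using h

lemma contDiff_fderiv_apply {f : E → G} (hf : ContDiff ℝ (⊤ : ℕ∞) f) (u : E) :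
    ContDiff ℝ (⊤ : ℕ∞) (fun p => fderiv ℝ f p u) :=
  ((contDiff_infty_iff_fderiv.1 hf).2).clm_apply contDiff_const

lemma contDiff_slice_left {f : E × F → G} (hf : ContDiff ℝ (⊤ : ℕ∞) f) (z : F) :
    ContDiff ℝ (⊤ : ℕ∞) (fun y : E => f (y, z)) :=
  hf.comp (contDiff_id.prodMk contDiff_const)

lemma infty_one_le : (1 : WithTop ℕ∞) ≤ ((⊤ : ℕ∞) : WithTop ℕ∞) := by
  exact_mod_cast le_top

lemma ContDiff.diff' {f : E → G} (hf : ContDiff ℝ (⊤ : ℕ∞) f) : Differentiable ℝ f :=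
  hf.differentiable (lt_of_lt_of_le zero_lt_one infty_one_le).ne'

end Slice

section Bridge
variable {f : (ℝ × ℝ) × ℝ → ℝ}

lemma hgradAt_eq (hf : ContDiff ℝ (⊤ : ℕ∞) f) (xy : ℝ × ℝ) (z : ℝ) :
    hgradAt f xy z
      = (fderiv ℝ f (xy, z) ((1, 0), 0), fderiv ℝ f (xy, z) ((0, 1), 0)) := by
  unfold hgradAt
  rw [fderiv_slice_left hf.diff', fderiv_slice_left hf.diff']

lemma dzAt_eq (hf : ContDiff ℝ (⊤ : ℕ∞) f) (p : (ℝ × ℝ) × ℝ) :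
    dzAt f p = fderiv ℝ f p (0, 1) := by
  unfold dzAt
  rw [deriv_slice_right hf.diff']

lemma dzzAt_eq (hf : ContDiff ℝ (⊤ : ℕ∞) f) (p : (ℝ × ℝ) × ℝ) :
    dzzAt f p = fderiv ℝ (fun p' => fderiv ℝ f p' (0, 1)) p (0, 1) := by
  unfold dzzAt
  have : (fun t : ℝ => dzAt f (p.1, t)) = fun t : ℝ => (fun p' => fderiv ℝ f p' (0, 1)) (p.1, t) := by
    funext t; exact dzAt_eq hf (p.1, t)
  rw [this, deriv_slice_right (contDiff_fderiv_apply hf _).diff']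

lemma hlapAt_eq (hf : ContDiff ℝ (⊤ : ℕ∞) f) (xy : ℝ × ℝ) (z : ℝ) :
    hlapAt f xy z
      = fderiv ℝ (fun p' => fderiv ℝ f p' ((1, 0), 0)) (xy, z) ((1, 0), 0)
        + fderiv ℝ (fun p' => fderiv ℝ f p' ((0, 1), 0)) (xy, z) ((0, 1), 0) := by
  unfold hlapAt
  have h1 : (fun y : ℝ × ℝ => fderiv ℝ (fun y' : ℝ × ℝ => f (y', z)) y (1, 0))
      = fun y : ℝ × ℝ => (fun p' => fderiv ℝ f p' ((1, 0), 0)) (y, z) := by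
    funext y; exact fderiv_slice_left hf.diff' z y (1, 0)
  have h2 : (fun y : ℝ × ℝ => fderiv ℝ (fun y' : ℝ × ℝ => f (y', z)) y (0, 1))
      = fun y : ℝ × ℝ => (fun p' => fderiv ℝ f p' ((0, 1), 0)) (y, z) := by
    funext y; exact fderiv_slice_left hf.diff' z y (0, 1)
  rw [h1, h2, fderiv_slice_left (contDiff_fderiv_apply hf _).diff',
    fderiv_slice_left (contDiff_fderiv_apply hf _).diff']

lemma continuous_hgradAt (hf : ContDiff ℝ (⊤ : ℕ∞) f) :
    Continuous (fun p : (ℝ × ℝ) × ℝ => hgradAt f p.1 p.2) := by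
  have : (fun p : (ℝ × ℝ) × ℝ => hgradAt f p.1 p.2)
      = fun p => (fderiv ℝ f p ((1, 0), 0), fderiv ℝ f p ((0, 1), 0)) := by
    funext p; exact hgradAt_eq hf p.1 p.2
  rw [this]
  exact ((contDiff_fderiv_apply hf _).continuous).prodMk
    ((contDiff_fderiv_apply hf _).continuous)

lemma continuous_dzAt (hf : ContDiff ℝ (⊤ : ℕ∞) f) : Continuous (dzAt f) := by
  have : dzAt f = fun p => fderiv ℝ f p (0, 1) := funext (dzAt_eq hf)
  rw [this]; exact (contDiff_fderiv_apply hf _).continuous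

lemma continuous_dzzAt (hf : ContDiff ℝ (⊤ : ℕ∞) f) : Continuous (dzzAt f) := by
  have : dzzAt f = fun p => fderiv ℝ (fun p' => fderiv ℝ f p' (0, 1)) p (0, 1) :=
    funext (dzzAt_eq hf)
  rw [this]; exact (contDiff_fderiv_apply (contDiff_fderiv_apply hf _) _).continuous

lemma continuous_hlapAt (hf : ContDiff ℝ (⊤ : ℕ∞) f) :
    Continuous (fun p : (ℝ × ℝ) × ℝ => hlapAt f p.1 p.2) := by
  have : (fun p : (ℝ × ℝ) × ℝ => hlapAt f p.1 p.2)
      = fun p => fderiv ℝ (fun p' => fderiv ℝ f p' ((1, 0), 0)) p ((1, 0), 0)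
        + fderiv ℝ (fun p' => fderiv ℝ f p' ((0, 1), 0)) p ((0, 1), 0) := by
    funext p; exact hlapAt_eq hf p.1 p.2
  rw [this]
  exact ((contDiff_fderiv_apply (contDiff_fderiv_apply hf _) _).continuous).add
    ((contDiff_fderiv_apply (contDiff_fderiv_apply hf _) _).continuous)

end Bridge

section BridgeV
variable {v : (ℝ × ℝ) × ℝ → ℝ × ℝ}

lemma hdivAt_eq (hv : ContDiff ℝ (⊤ : ℕ∞) v) (xy : ℝ × ℝ) (z : ℝ) :
    hdivAt v xy z
      = fderiv ℝ (fun p => (v p).1) (xy, z) ((1, 0), 0)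
        + fderiv ℝ (fun p => (v p).2) (xy, z) ((0, 1), 0) := by
  unfold hdivAt
  have h1 : (fun y : ℝ × ℝ => (v (y, z)).1) = fun y : ℝ × ℝ => (fun p => (v p).1) (y, z) := rfl
  have h2 : (fun y : ℝ × ℝ => (v (y, z)).2) = fun y : ℝ × ℝ => (fun p => (v p).2) (y, z) := rfl
  rw [h1, h2,
    fderiv_slice_left (f := fun p => (v p).1) ((contDiff_fst.comp hv).diff') z xy (1, 0),
    fderiv_slice_left (f := fun p => (v p).2) ((contDiff_snd.comp hv).diff') z xy (0, 1)]

lemma continuous_hdivAt (hv : ContDiff ℝ (⊤ : ℕ∞) v) :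
    Continuous (fun p : (ℝ × ℝ) × ℝ => hdivAt v p.1 p.2) := by
  have : (fun p : (ℝ × ℝ) × ℝ => hdivAt v p.1 p.2)
      = fun p => fderiv ℝ (fun p' => (v p').1) p ((1, 0), 0)
        + fderiv ℝ (fun p' => (v p').2) p ((0, 1), 0) := by
    funext p; exact hdivAt_eq hv p.1 p.2
  rw [this]
  exact ((contDiff_fderiv_apply (contDiff_fst.comp hv) _).continuous).add
    ((contDiff_fderiv_apply (contDiff_snd.comp hv) _).continuous)

lemma continuous_wAt (hv : ContDiff ℝ (⊤ : ℕ∞) v) : Continuous (wAt v) := by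
  unfold wAt
  have h := intervalIntegral.continuous_parametric_primitive_of_continuous
    (μ := volume) (f := fun (x : ℝ × ℝ) (ζ : ℝ) => hdivAt v x ζ) (a₀ := 0)
    ?_
  · exact h.neg
  · exact continuous_hdivAt hv

lemma hasDerivAt_wAt (hv : ContDiff ℝ (⊤ : ℕ∞) v) (x : ℝ × ℝ) (z : ℝ) :
    HasDerivAt (fun s : ℝ => wAt v (x, s)) (-hdivAt v x z) z := by
  have hc : Continuous (fun ζ : ℝ => hdivAt v x ζ) :=
    (continuous_hdivAt hv).comp (Continuous.prodMk_right x)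
  have h := (intervalIntegral.integral_hasDerivAt_right
    (hc.intervalIntegrable 0 z) (hc.stronglyMeasurableAtFilter _ _)
    hc.continuousAt : HasDerivAt (fun u => ∫ ζ in (0:ℝ)..u, hdivAt v x ζ) (hdivAt v x z) z)
  simpa [wAt] using h.fun_neg

end BridgeV

section Gronwall

lemma gronwall_decay {E D : ℝ → ℝ} {lam K : ℝ} (hlam : 0 < lam) (hK : 0 ≤ K)
    (hE : ∀ s, HasDerivAt E (D s) s) (hD : ∀ s, D s ≤ -lam * E s + K) :
    ∀ t, 0 ≤ t → E t ≤ E 0 * Real.exp (-(lam * t)) + K / lam := by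
  set G : ℝ → ℝ := fun s => (E s - K / lam) * Real.exp (lam * s) with hGdef
  have hKK : lam * (K / lam) = K := by field_simp
  have hGd : ∀ s, HasDerivAt G
      (D s * Real.exp (lam * s) + (E s - K / lam) * (Real.exp (lam * s) * lam)) s := by
    intro s
    have hexp : HasDerivAt (fun u : ℝ => Real.exp (lam * u)) (Real.exp (lam * s) * lam) s := by
      simpa using ((hasDerivAt_id s).const_mul lam).exp
    exact ((hE s).sub_const (K / lam)).mul hexp
  have hanti : Antitone G := by
    apply antitone_of_deriv_nonpos
    · intro s; exact (hGd s).differentiableAt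
    · intro s
      rw [(hGd s).deriv]
      have h1 := hD s
      have h2 := Real.exp_pos (lam * s)
      nlinarith [mul_le_mul_of_nonneg_right h1 h2.le]
  intro t ht
  have hGt : G t ≤ G 0 := hanti ht
  rw [hGdef] at hGt
  simp only [mul_zero, Real.exp_zero, mul_one] at hGt
  have hexp2 := Real.exp_pos (-(lam * t))
  have hprod : Real.exp (lam * t) * Real.exp (-(lam * t)) = 1 := by
    rw [← Real.exp_add]; simp
  have hmul := mul_le_mul_of_nonneg_right hGt hexp2.le
  have hKl : 0 ≤ K / lam := div_nonneg hK hlam.le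
  have h3 : E t - K / lam ≤ (E 0 - K / lam) * Real.exp (-(lam * t)) := by
    calc E t - K / lam
        = (E t - K / lam) * (Real.exp (lam * t) * Real.exp (-(lam * t))) := by
          rw [hprod]; ring
      _ = (E t - K / lam) * Real.exp (lam * t) * Real.exp (-(lam * t)) := by ring
      _ ≤ _ := hmul
  nlinarith [h3, mul_nonneg hKl hexp2.le]

end Gronwall

section OneD

set_option maxHeartbeats 1000000 in
lemma oneD_decay (g : ℝ → ℝ) (hg : ContDiff ℝ (⊤ : ℕ∞) g) (β Rt₄ : ℝ)
    (hβ : 0 < β) (hRt₄ : 0 < Rt₄)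
    (htop : (1 / Rt₄) * deriv g 1 + β * g 1 = 0) (hbot : deriv g 0 = 0) :
    (1 / Rt₄) * ∫ z in (0:ℝ)..1, g z * deriv (deriv g) z
      ≤ -((1 / (2 * Rt₄ + 2 / β)) * ∫ z in (0:ℝ)..1, (g z) ^ 2) := by
  have hgd : Differentiable ℝ g := hg.diff'
  have hg' : ContDiff ℝ (⊤ : ℕ∞) (deriv g) := (contDiff_infty_iff_deriv.1 hg).2
  have hg'd : Differentiable ℝ (deriv g) := hg'.diff'
  have hcg : Continuous g := hg.continuous
  have hcg' : Continuous (deriv g) := hg'.continuous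
  have hcg'' : Continuous (deriv (deriv g)) := ((contDiff_infty_iff_deriv.1 hg').2).continuous
  set A : ℝ := ∫ z in (0:ℝ)..1, (deriv g z) ^ 2 with hA
  set B : ℝ := (g 1) ^ 2 with hB
  set I : ℝ := ∫ z in (0:ℝ)..1, |deriv g z| with hI
  have hAnn : 0 ≤ A := intervalIntegral.integral_nonneg zero_le_one (fun u _ => sq_nonneg _)
  have hBnn : 0 ≤ B := sq_nonneg _
  have hInn : 0 ≤ I := intervalIntegral.integral_nonneg zero_le_one (fun u _ => abs_nonneg _)
  have hkey : ∀ c : ℝ, 0 < c → I ≤ c / 2 + A / (2 * c) := by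
    intro c hc
    have hdiv : A / (2 * c) = ∫ z in (0:ℝ)..1, (deriv g z) ^ 2 / (2 * c) := by
      rw [hA, ← intervalIntegral.integral_div]
    rw [hdiv, hI]
    have hconst : (c / 2 : ℝ) = ∫ _ in (0:ℝ)..1, (c / 2 : ℝ) := by simp
    rw [hconst, ← intervalIntegral.integral_add intervalIntegrable_const
      (((hcg'.fun_pow 2).div_const _).intervalIntegrable _ _)]
    apply intervalIntegral.integral_mono_on zero_le_one
      (hcg'.abs.intervalIntegrable _ _)
      (intervalIntegrable_const.add
        (((hcg'.fun_pow 2).div_const _).intervalIntegrable _ _))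
    intro x _
    have h1 : (|deriv g x| - c) ^ 2 ≥ 0 := sq_nonneg _
    have h2 : |deriv g x| ^ 2 = (deriv g x) ^ 2 := sq_abs _
    rw [div_add_div _ _ (by norm_num) (by positivity), le_div_iff₀ (by positivity)]
    nlinarith
  have hI2A : I ^ 2 ≤ A := by
    rcases eq_or_lt_of_le hAnn with h0 | hpos
    · have hA0 : A = 0 := h0.symm
      have hIle : I ≤ 0 := by
        refine le_of_forall_pos_le_add ?_
        intro ε hε
        have h := hkey ε hε
        rw [hA0] at h
        simp at h
        linarith
      have hI0 : I = 0 := le_antisymm hIle hInn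
      rw [hI0, hA0]; norm_num
    · have hs := Real.sqrt_pos.mpr hpos
      have hsqA : Real.sqrt A ^ 2 = A := Real.sq_sqrt hAnn
      have h1 := hkey (Real.sqrt A) hs
      have hdiv : A / (2 * Real.sqrt A) = Real.sqrt A / 2 := by
        rw [div_eq_div_iff (by positivity) (by norm_num)]
        nlinarith
      have hIle : I ≤ Real.sqrt A := by rw [hdiv] at h1; linarith
      nlinarith
  have hptw : ∀ z ∈ Icc (0:ℝ) 1, (g z) ^ 2 ≤ 2 * B + 2 * A := by
    intro z hz
    have hz1 : z ≤ 1 := hz.2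
    set J : ℝ := ∫ u in z..1, deriv g u with hJ
    have hftc : J = g 1 - g z := by
      rw [hJ]
      apply intervalIntegral.integral_deriv_eq_sub (fun u _ => hgd.differentiableAt)
      exact hcg'.intervalIntegrable _ _
    have hJabs : |J| ≤ I := by
      calc |J| ≤ ∫ u in z..1, |deriv g u| :=
            intervalIntegral.abs_integral_le_integral_abs hz1
        _ ≤ I := by
            apply intervalIntegral.integral_mono_interval (μ := volume) hz.1 hz1 le_rfl
            · exact Filter.Eventually.of_forall (fun u => abs_nonneg _)
            · exact hcg'.abs.intervalIntegrable _ _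
    have hgz : g z = g 1 - J := by linarith [hftc]
    have hJ2 : J ^ 2 ≤ A := by
      calc J ^ 2 = |J| ^ 2 := (sq_abs _).symm
        _ ≤ I ^ 2 := by nlinarith [abs_nonneg J]
        _ ≤ A := hI2A
    rw [hgz, hB]
    nlinarith [sq_nonneg (g 1 + J)]
  have hY : (∫ z in (0:ℝ)..1, (g z) ^ 2) ≤ 2 * B + 2 * A := by
    have h := intervalIntegral.integral_mono_on zero_le_one
      ((hcg.pow 2).intervalIntegrable _ _)
      (intervalIntegrable_const (μ := volume) (c := 2 * B + 2 * A)) hptw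
    simpa using h
  have hibp : (∫ z in (0:ℝ)..1, ((deriv g z) ^ 2 + g z * deriv (deriv g) z))
      = g 1 * deriv g 1 - g 0 * deriv g 0 :=
    intervalIntegral.integral_eq_sub_of_hasDerivAt (f := fun z => g z * deriv g z)
      (fun z _ => by
        have h1 : HasDerivAt g (deriv g z) z := (hgd z).hasDerivAt
        have h2 : HasDerivAt (deriv g) (deriv (deriv g) z) z := (hg'd z).hasDerivAt
        simpa [sq] using h1.fun_mul h2)
      (((hcg'.pow 2).add (hcg.mul hcg'')).intervalIntegrable _ _)
  have hsplit : (∫ z in (0:ℝ)..1, ((deriv g z) ^ 2 + g z * deriv (deriv g) z))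
      = A + ∫ z in (0:ℝ)..1, g z * deriv (deriv g) z := by
    rw [hA]
    rw [intervalIntegral.integral_add ((hcg'.fun_pow 2).intervalIntegrable _ _)
      ((hcg.fun_mul hcg'').intervalIntegrable _ _)]
  have higg : (∫ z in (0:ℝ)..1, g z * deriv (deriv g) z) = g 1 * deriv g 1 - A := by
    rw [hsplit, hbot] at hibp
    simp only [mul_zero, sub_zero] at hibp
    linarith
  rw [higg]
  have hc : 0 < 2 * Rt₄ + 2 / β := by positivity
  set lam : ℝ := 1 / (2 * Rt₄ + 2 / β) with hlam
  have hlampos : 0 < lam := by positivity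
  have h2lamβ : 2 * lam ≤ β := by
    rw [hlam, mul_one_div, div_le_iff₀ hc]
    have h1 : β * (2 * Rt₄ + 2 / β) = 2 * β * Rt₄ + 2 := by field_simp
    nlinarith [mul_pos hβ hRt₄]
  have h2lamR : 2 * lam ≤ 1 / Rt₄ := by
    rw [hlam, mul_one_div, div_le_div_iff₀ hc hRt₄]
    have h1 : 0 ≤ 2 / β := by positivity
    nlinarith
  have htop' : (1 / Rt₄) * deriv g 1 = -β * g 1 := by linarith
  have hY' : lam * (∫ z in (0:ℝ)..1, (g z) ^ 2) ≤ lam * (2 * B + 2 * A) :=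
    mul_le_mul_of_nonneg_left hY hlampos.le
  have hgg : (1 / Rt₄) * (g 1 * deriv g 1) = -β * B := by
    rw [hB, sq]
    calc (1 / Rt₄) * (g 1 * deriv g 1) = g 1 * ((1 / Rt₄) * deriv g 1) := by ring
      _ = g 1 * (-β * g 1) := by rw [htop']
      _ = -β * (g 1 * g 1) := by ring
  have hexp : (1 / Rt₄) * (g 1 * deriv g 1 - A) = -β * B - (1 / Rt₄) * A := by
    rw [mul_sub, hgg]
  rw [hexp]
  have hbB := mul_le_mul_of_nonneg_right h2lamβ hBnn
  have hbA := mul_le_mul_of_nonneg_right h2lamR hAnn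
  nlinarith [hY']

end OneD

section Domain
variable {M : Set (ℝ × ℝ)}

lemma boundedO (hMb : Bornology.IsBounded M) :
    Bornology.IsBounded (M ×ˢ Ioo (0:ℝ) 1) :=
  hMb.prod (Metric.isBounded_Ioo 0 1)

lemma volO_lt (hMb : Bornology.IsBounded M) : volume (M ×ˢ Ioo (0:ℝ) 1) < ⊤ :=
  (boundedO hMb).measure_lt_top

lemma contIntO {f : (ℝ×ℝ)×ℝ → ℝ} (hMb : Bornology.IsBounded M) (hf : Continuous f) :
    IntegrableOn f (M ×ˢ Ioo (0:ℝ) 1) :=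
  (hf.continuousOn.integrableOn_compact (boundedO hMb).isCompact_closure).mono_set
    subset_closure

lemma contIntM {f : ℝ×ℝ → ℝ} (hMb : Bornology.IsBounded M) (hf : Continuous f) :
    IntegrableOn f M :=
  (hf.continuousOn.integrableOn_compact hMb.isCompact_closure).mono_set subset_closure

lemma restrictO_eq :
    (volume : Measure ((ℝ×ℝ)×ℝ)).restrict (M ×ˢ Ioo (0:ℝ) 1)
      = (volume.restrict M).prod (volume.restrict (Ioo (0:ℝ) 1)) := by
  rw [MeasureTheory.Measure.volume_eq_prod, Measure.prod_restrict]

lemma integrableO_prod {f : (ℝ×ℝ)×ℝ → ℝ} (hf : IntegrableOn f (M ×ˢ Ioo (0:ℝ) 1)) :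
    Integrable f ((volume.restrict M).prod (volume.restrict (Ioo (0:ℝ) 1))) := by
  rw [← restrictO_eq]; exact hf

lemma fubini_xz {f : (ℝ×ℝ)×ℝ → ℝ} (hf : IntegrableOn f (M ×ˢ Ioo (0:ℝ) 1)) :
    ∫ p in M ×ˢ Ioo (0:ℝ) 1, f p = ∫ x in M, ∫ z in Ioo (0:ℝ) 1, f (x, z) := by
  calc ∫ p in M ×ˢ Ioo (0:ℝ) 1, f p
      = ∫ p, f p ∂((volume.restrict M).prod (volume.restrict (Ioo (0:ℝ) 1))) := by
        rw [restrictO_eq]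
    _ = _ := MeasureTheory.integral_prod f (integrableO_prod hf)

lemma fubini_zx {f : (ℝ×ℝ)×ℝ → ℝ} (hf : IntegrableOn f (M ×ˢ Ioo (0:ℝ) 1)) :
    ∫ p in M ×ˢ Ioo (0:ℝ) 1, f p = ∫ z in Ioo (0:ℝ) 1, ∫ x in M, f (x, z) := by
  calc ∫ p in M ×ˢ Ioo (0:ℝ) 1, f p
      = ∫ p, f p ∂((volume.restrict M).prod (volume.restrict (Ioo (0:ℝ) 1))) := by
        rw [restrictO_eq]
    _ = _ := MeasureTheory.integral_prod_symm f (integrableO_prod hf)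

lemma marginal_x {f : (ℝ×ℝ)×ℝ → ℝ} (hf : IntegrableOn f (M ×ˢ Ioo (0:ℝ) 1)) :
    IntegrableOn (fun x => ∫ z in Ioo (0:ℝ) 1, f (x, z)) M :=
  (integrableO_prod hf).integral_prod_left

lemma Ioo_int (g : ℝ → ℝ) : (∫ z in Ioo (0:ℝ) 1, g z) = ∫ z in (0:ℝ)..1, g z := by
  rw [intervalIntegral.integral_of_le zero_le_one, integral_Ioc_eq_integral_Ioo]

end Domain

lemma enorm2_sq (u : ℝ × ℝ) : enorm2 u ^ 2 = u.1 ^ 2 + u.2 ^ 2 :=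
  Real.sq_sqrt (by positivity)

lemma continuous_enorm2 : Continuous enorm2 :=
  Real.continuous_sqrt.comp (((continuous_fst).pow 2).add ((continuous_snd).pow 2))

lemma fderiv_mul_dir {φ ψ : ℝ × ℝ → ℝ} {xy : ℝ × ℝ}
    (hφ : DifferentiableAt ℝ φ xy) (hψ : DifferentiableAt ℝ ψ xy) (u : ℝ × ℝ) :
    fderiv ℝ (fun y => φ y * ψ y) xy u
      = fderiv ℝ φ xy u * ψ xy + φ xy * fderiv ℝ ψ xy u := by
  rw [fderiv_fun_mul hφ hψ]
  simp [ContinuousLinearMap.add_apply, ContinuousLinearMap.smul_apply]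
  ring

section Expand
variable {Q : (ℝ×ℝ)×ℝ → ℝ} {v : (ℝ×ℝ)×ℝ → ℝ×ℝ}

lemma expand_v_tangent (hG : ContDiff ℝ (⊤:ℕ∞) Q) (hv : ContDiff ℝ (⊤:ℕ∞) v)
    (z : ℝ) (xy : ℝ × ℝ) :
    fderiv ℝ (fun y : ℝ×ℝ => Q (y,z) * (v (y,z)).1) xy (1,0)
      + fderiv ℝ (fun y : ℝ×ℝ => Q (y,z) * (v (y,z)).2) xy (0,1)
    = dot2 (hgradAt Q xy z) (v (xy,z)) + Q (xy,z) * hdivAt v xy z := by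
  have hGd : DifferentiableAt ℝ (fun y : ℝ×ℝ => Q (y,z)) xy :=
    ((contDiff_slice_left hG z).diff' xy)
  have hv1 : DifferentiableAt ℝ (fun y : ℝ×ℝ => (v (y,z)).1) xy :=
    ((contDiff_slice_left (contDiff_fst.comp hv) z).diff' xy)
  have hv2 : DifferentiableAt ℝ (fun y : ℝ×ℝ => (v (y,z)).2) xy :=
    ((contDiff_slice_left (contDiff_snd.comp hv) z).diff' xy)
  rw [fderiv_mul_dir hGd hv1, fderiv_mul_dir hGd hv2]
  unfold dot2 hgradAt hdivAt
  ring

lemma expand_q_neumann (hQ : ContDiff ℝ (⊤:ℕ∞) Q) (z : ℝ) (xy : ℝ × ℝ) :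
    fderiv ℝ (fun y : ℝ×ℝ => Q (y,z) * (hgradAt Q y z).1) xy (1,0)
      + fderiv ℝ (fun y : ℝ×ℝ => Q (y,z) * (hgradAt Q y z).2) xy (0,1)
    = enorm2 (hgradAt Q xy z) ^ 2 + Q (xy,z) * hlapAt Q xy z := by
  have hQs : DifferentiableAt ℝ (fun y : ℝ×ℝ => Q (y,z)) xy :=
    ((contDiff_slice_left hQ z).diff' xy)
  have e1 : (fun y : ℝ×ℝ => Q (y,z) * (hgradAt Q y z).1)
      = fun y : ℝ×ℝ => Q (y,z) * fderiv ℝ (fun y' : ℝ×ℝ => Q (y',z)) y (1,0) := rfl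
  have e2 : (fun y : ℝ×ℝ => Q (y,z) * (hgradAt Q y z).2)
      = fun y : ℝ×ℝ => Q (y,z) * fderiv ℝ (fun y' : ℝ×ℝ => Q (y',z)) y (0,1) := rfl
  have hF1 : (fun y : ℝ×ℝ => fderiv ℝ (fun y' : ℝ×ℝ => Q (y',z)) y (1,0))
      = fun y : ℝ×ℝ => (fun p => fderiv ℝ Q p ((1,0),0)) (y,z) := by
    funext y; exact fderiv_slice_left hQ.diff' z y (1,0)
  have hF2 : (fun y : ℝ×ℝ => fderiv ℝ (fun y' : ℝ×ℝ => Q (y',z)) y (0,1))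
      = fun y : ℝ×ℝ => (fun p => fderiv ℝ Q p ((0,1),0)) (y,z) := by
    funext y; exact fderiv_slice_left hQ.diff' z y (0,1)
  have hd1 : DifferentiableAt ℝ
      (fun y : ℝ×ℝ => fderiv ℝ (fun y' : ℝ×ℝ => Q (y',z)) y (1,0)) xy := by
    rw [hF1]; exact (contDiff_slice_left (contDiff_fderiv_apply hQ _) z).diff' xy
  have hd2 : DifferentiableAt ℝ
      (fun y : ℝ×ℝ => fderiv ℝ (fun y' : ℝ×ℝ => Q (y',z)) y (0,1)) xy := by
    rw [hF2]; exact (contDiff_slice_left (contDiff_fderiv_apply hQ _) z).diff' xy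
  rw [e1, e2, fderiv_mul_dir hQs hd1 (1,0), fderiv_mul_dir hQs hd2 (0,1), enorm2_sq]
  unfold hgradAt hlapAt
  ring

end Expand

section Transport
variable {M : Set (ℝ × ℝ)} {Q : (ℝ×ℝ)×ℝ → ℝ} {v : (ℝ×ℝ)×ℝ → ℝ×ℝ}

lemma hgrad_sq_1 (hQ : ContDiff ℝ (⊤:ℕ∞) Q) (p : (ℝ×ℝ)×ℝ) :
    (hgradAt (fun p' => Q p' * Q p') p.1 p.2).1 = 2 * Q p * (hgradAt Q p.1 p.2).1 := by
  have hQs : DifferentiableAt ℝ (fun y : ℝ×ℝ => Q (y,p.2)) p.1 :=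
    ((contDiff_slice_left hQ p.2).diff' p.1)
  show fderiv ℝ (fun y : ℝ×ℝ => Q (y,p.2) * Q (y,p.2)) p.1 (1,0) = _
  rw [fderiv_mul_dir hQs hQs (1,0)]
  show _ = 2 * Q p * fderiv ℝ (fun y : ℝ×ℝ => Q (y,p.2)) p.1 (1,0)
  ring

lemma hgrad_sq_2 (hQ : ContDiff ℝ (⊤:ℕ∞) Q) (p : (ℝ×ℝ)×ℝ) :
    (hgradAt (fun p' => Q p' * Q p') p.1 p.2).2 = 2 * Q p * (hgradAt Q p.1 p.2).2 := by
  have hQs : DifferentiableAt ℝ (fun y : ℝ×ℝ => Q (y,p.2)) p.1 :=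
    ((contDiff_slice_left hQ p.2).diff' p.1)
  show fderiv ℝ (fun y : ℝ×ℝ => Q (y,p.2) * Q (y,p.2)) p.1 (0,1) = _
  rw [fderiv_mul_dir hQs hQs (0,1)]
  show _ = 2 * Q p * fderiv ℝ (fun y : ℝ×ℝ => Q (y,p.2)) p.1 (0,1)
  ring

lemma hasDerivAt_z (hQ : ContDiff ℝ (⊤:ℕ∞) Q) (x : ℝ×ℝ) (z : ℝ) :
    HasDerivAt (fun s : ℝ => Q (x,s)) (dzAt Q (x,z)) z := by
  rw [dzAt_eq hQ]
  exact hasDerivAt_slice_right hQ.diff' x z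

lemma dz_sq (hQ : ContDiff ℝ (⊤:ℕ∞) Q) (p : (ℝ×ℝ)×ℝ) :
    dzAt (fun p' => Q p' * Q p') p = 2 * Q p * dzAt Q p := by
  have h := (hasDerivAt_z hQ p.1 p.2).mul (hasDerivAt_z hQ p.1 p.2)
  have h2 : dzAt (fun p' => Q p' * Q p') p
      = dzAt Q (p.1, p.2) * Q (p.1, p.2) + Q (p.1, p.2) * dzAt Q (p.1, p.2) := h.deriv
  rw [h2]; ring

lemma transport_zero (hM : IsOpen M) (hMb : Bornology.IsBounded M)
    (hQ : ContDiff ℝ (⊤:ℕ∞) Q) (hv : ContDiff ℝ (⊤:ℕ∞) v)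
    (hlat : ∀ φ : ℝ×ℝ → ℝ, ∀ z : ℝ, ContDiff ℝ 1 φ →
      (∫ xy in M, (fderiv ℝ (fun y : ℝ×ℝ => φ y * (v (y,z)).1) xy (1,0) +
        fderiv ℝ (fun y : ℝ×ℝ => φ y * (v (y,z)).2) xy (0,1))) = 0)
    (hbaro : ∀ xy ∈ M, (∫ ζ in (0:ℝ)..1, hdivAt v xy ζ) = 0) :
    (∫ p in M ×ˢ Ioo (0:ℝ) 1,
      Q p * (dot2 (hgradAt Q p.1 p.2) (v p) + wAt v p * dzAt Q p)) = 0 := by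
  have hG : ContDiff ℝ (⊤:ℕ∞) (fun p => Q p * Q p) := hQ.mul hQ
  have hcQ := hQ.continuous
  have hcv := hv.continuous
  have hcG : Continuous (fun p : (ℝ×ℝ)×ℝ => Q p * Q p) := hcQ.mul hcQ
  have hchgG := continuous_hgradAt hG
  have hcdzG := continuous_dzAt hG
  have hchd := continuous_hdivAt hv
  have hcw := continuous_wAt hv
  have hchgQ := continuous_hgradAt hQ
  have hcdzQ := continuous_dzAt hQ
  -- continuity of the two flux integrands
  have hcf1 : Continuous (fun p : (ℝ×ℝ)×ℝ =>
      dot2 (hgradAt (fun p' => Q p' * Q p') p.1 p.2) (v p)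
        + (Q p * Q p) * hdivAt v p.1 p.2) := by
    apply Continuous.add
    · exact ((continuous_fst.comp hchgG).mul (continuous_fst.comp hcv)).add
        ((continuous_snd.comp hchgG).mul (continuous_snd.comp hcv))
    · exact hcG.mul hchd
  have hcf2 : Continuous (fun p : (ℝ×ℝ)×ℝ =>
      wAt v p * dzAt (fun p' => Q p' * Q p') p - (Q p * Q p) * hdivAt v p.1 p.2) := by
    exact (hcw.mul hcdzG).sub (hcG.mul hchd)
  -- S1 : horizontal flux vanishes
  have hS1 : (∫ p in M ×ˢ Ioo (0:ℝ) 1,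
      (dot2 (hgradAt (fun p' => Q p' * Q p') p.1 p.2) (v p)
        + (Q p * Q p) * hdivAt v p.1 p.2)) = 0 := by
    calc (∫ p in M ×ˢ Ioo (0:ℝ) 1,
        (dot2 (hgradAt (fun p' => Q p' * Q p') p.1 p.2) (v p)
          + (Q p * Q p) * hdivAt v p.1 p.2))
        = ∫ z in Ioo (0:ℝ) 1, ∫ x in M,
            (dot2 (hgradAt (fun p' => Q p' * Q p') x z) (v (x,z))
              + (Q (x,z) * Q (x,z)) * hdivAt v x z) := fubini_zx (contIntO hMb hcf1)
      _ = ∫ z in Ioo (0:ℝ) 1, (0:ℝ) := by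
          apply setIntegral_congr_fun measurableSet_Ioo
          intro z _
          have hφ : ContDiff ℝ 1 (fun y : ℝ×ℝ => Q (y,z) * Q (y,z)) :=
            (contDiff_slice_left hG z).of_le infty_one_le
          have h0 : (∫ xy in M,
              (fderiv ℝ (fun y : ℝ×ℝ => (Q (y,z) * Q (y,z)) * (v (y,z)).1) xy (1,0) +
                fderiv ℝ (fun y : ℝ×ℝ => (Q (y,z) * Q (y,z)) * (v (y,z)).2) xy (0,1))) = 0 :=
            hlat (fun y => Q (y,z) * Q (y,z)) z hφ
          rw [← h0]
          apply setIntegral_congr_fun hM.measurableSet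
          intro xy _
          exact (expand_v_tangent (Q := fun p => Q p * Q p) hG hv z xy).symm
      _ = 0 := by simp
  -- S2 : vertical flux vanishes
  have hS2 : (∫ p in M ×ˢ Ioo (0:ℝ) 1,
      (wAt v p * dzAt (fun p' => Q p' * Q p') p - (Q p * Q p) * hdivAt v p.1 p.2)) = 0 := by
    calc (∫ p in M ×ˢ Ioo (0:ℝ) 1,
        (wAt v p * dzAt (fun p' => Q p' * Q p') p - (Q p * Q p) * hdivAt v p.1 p.2))
        = ∫ x in M, ∫ z in Ioo (0:ℝ) 1,
            (wAt v (x,z) * dzAt (fun p' => Q p' * Q p') (x,z)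
              - (Q (x,z) * Q (x,z)) * hdivAt v x z) := fubini_xz (contIntO hMb hcf2)
      _ = ∫ x in M, (0:ℝ) := by
          apply setIntegral_congr_fun hM.measurableSet
          intro x hx
          beta_reduce
          rw [Ioo_int]
          have hder : ∀ z ∈ uIcc (0:ℝ) 1,
              HasDerivAt (fun s : ℝ => wAt v (x,s) * ((fun p' => Q p' * Q p') (x,s)))
                (wAt v (x,z) * dzAt (fun p' => Q p' * Q p') (x,z)
                  - (Q (x,z) * Q (x,z)) * hdivAt v x z) z := by
            intro z _
            have h1 := hasDerivAt_wAt hv x z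
            have h2 := hasDerivAt_z hG x z
            have h := h1.fun_mul h2
            exact h.congr_deriv (by ring)
          have hint : IntervalIntegrable
              (fun z => wAt v (x,z) * dzAt (fun p' => Q p' * Q p') (x,z)
                - (Q (x,z) * Q (x,z)) * hdivAt v x z) volume 0 1 := by
            apply Continuous.intervalIntegrable
            exact hcf2.comp (Continuous.prodMk_right x)
          rw [intervalIntegral.integral_eq_sub_of_hasDerivAt hder hint]
          have hw1 : wAt v (x,1) = 0 := by
            show -(∫ ζ in (0:ℝ)..(1:ℝ), hdivAt v x ζ) = 0
            rw [hbaro x hx]; ring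
          have hw0 : wAt v (x,0) = 0 := by
            show -(∫ ζ in (0:ℝ)..(0:ℝ), hdivAt v x ζ) = 0
            simp
          show wAt v (x,1) * (Q (x,1) * Q (x,1)) - wAt v (x,0) * (Q (x,0) * Q (x,0)) = 0
          rw [hw1, hw0]; ring
      _ = 0 := by simp
  -- combine
  have hpt : ∀ p : (ℝ×ℝ)×ℝ,
      2 * (Q p * (dot2 (hgradAt Q p.1 p.2) (v p) + wAt v p * dzAt Q p))
      = (dot2 (hgradAt (fun p' => Q p' * Q p') p.1 p.2) (v p)
          + (Q p * Q p) * hdivAt v p.1 p.2)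
        + (wAt v p * dzAt (fun p' => Q p' * Q p') p - (Q p * Q p) * hdivAt v p.1 p.2) := by
    intro p
    have h1 := hgrad_sq_1 hQ p
    have h2 := hgrad_sq_2 hQ p
    have h3 := dz_sq hQ p
    simp only [dot2, h1, h2, h3]
    ring
  have hsum : (∫ p in M ×ˢ Ioo (0:ℝ) 1,
      2 * (Q p * (dot2 (hgradAt Q p.1 p.2) (v p) + wAt v p * dzAt Q p))) = 0 := by
    calc (∫ p in M ×ˢ Ioo (0:ℝ) 1,
        2 * (Q p * (dot2 (hgradAt Q p.1 p.2) (v p) + wAt v p * dzAt Q p)))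
        = ∫ p in M ×ˢ Ioo (0:ℝ) 1,
            ((dot2 (hgradAt (fun p' => Q p' * Q p') p.1 p.2) (v p)
              + (Q p * Q p) * hdivAt v p.1 p.2)
            + (wAt v p * dzAt (fun p' => Q p' * Q p') p
              - (Q p * Q p) * hdivAt v p.1 p.2)) := by
          apply integral_congr_ae
          exact Filter.Eventually.of_forall (fun p => hpt p)
      _ = (∫ p in M ×ˢ Ioo (0:ℝ) 1,
            (dot2 (hgradAt (fun p' => Q p' * Q p') p.1 p.2) (v p)
              + (Q p * Q p) * hdivAt v p.1 p.2))
          + ∫ p in M ×ˢ Ioo (0:ℝ) 1,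
            (wAt v p * dzAt (fun p' => Q p' * Q p') p
              - (Q p * Q p) * hdivAt v p.1 p.2) :=
          integral_add (contIntO hMb hcf1) (contIntO hMb hcf2)
      _ = 0 := by rw [hS1, hS2]; ring
  have h2 : (∫ p in M ×ˢ Ioo (0:ℝ) 1,
      2 * (Q p * (dot2 (hgradAt Q p.1 p.2) (v p) + wAt v p * dzAt Q p)))
      = 2 * ∫ p in M ×ˢ Ioo (0:ℝ) 1,
        (Q p * (dot2 (hgradAt Q p.1 p.2) (v p) + wAt v p * dzAt Q p)) :=
    integral_const_mul 2 _
  rw [h2] at hsum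
  linarith

end Transport

section Diffusion
variable {M : Set (ℝ × ℝ)} {Q : (ℝ×ℝ)×ℝ → ℝ}

lemma hlap_nonpos (hM : IsOpen M) (hMb : Bornology.IsBounded M)
    (hQ : ContDiff ℝ (⊤:ℕ∞) Q)
    (hlat : ∀ φ : ℝ×ℝ → ℝ, ∀ z : ℝ, ContDiff ℝ 1 φ →
      (∫ xy in M, (fderiv ℝ (fun y : ℝ×ℝ => φ y * (hgradAt Q y z).1) xy (1,0) +
        fderiv ℝ (fun y : ℝ×ℝ => φ y * (hgradAt Q y z).2) xy (0,1))) = 0) :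
    (∫ p in M ×ˢ Ioo (0:ℝ) 1, Q p * hlapAt Q p.1 p.2) ≤ 0 := by
  have hc : Continuous (fun p : (ℝ×ℝ)×ℝ => Q p * hlapAt Q p.1 p.2) :=
    hQ.continuous.mul (continuous_hlapAt hQ)
  have hfub : (∫ p in M ×ˢ Ioo (0:ℝ) 1, Q p * hlapAt Q p.1 p.2)
      = ∫ z in Ioo (0:ℝ) 1, ∫ x in M, Q (x,z) * hlapAt Q x z :=
    fubini_zx (contIntO hMb hc)
  rw [hfub]
  apply integral_nonpos_of_ae
  apply Filter.Eventually.of_forall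
  intro z
  show (∫ x in M, Q (x,z) * hlapAt Q x z) ≤ 0
  have hφ : ContDiff ℝ 1 (fun y : ℝ×ℝ => Q (y,z)) :=
    (contDiff_slice_left hQ z).of_le infty_one_le
  have h0 : (∫ xy in M,
      (fderiv ℝ (fun y : ℝ×ℝ => Q (y,z) * (hgradAt Q y z).1) xy (1,0) +
        fderiv ℝ (fun y : ℝ×ℝ => Q (y,z) * (hgradAt Q y z).2) xy (0,1))) = 0 :=
    hlat (fun y => Q (y,z)) z hφ
  have hsplit : (∫ x in M, (enorm2 (hgradAt Q x z) ^ 2 + Q (x,z) * hlapAt Q x z)) = 0 := by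
    rw [← h0]
    apply setIntegral_congr_fun hM.measurableSet
    intro xy _
    exact (expand_q_neumann hQ z xy).symm
  have hce : Continuous (fun x : ℝ×ℝ => enorm2 (hgradAt Q x z) ^ 2) := by
    apply Continuous.pow
    exact continuous_enorm2.comp
      ((continuous_hgradAt hQ).comp (continuous_id.prodMk continuous_const))
  have hcq : Continuous (fun x : ℝ×ℝ => Q (x,z) * hlapAt Q x z) :=
    hc.comp (continuous_id.prodMk continuous_const)
  rw [integral_add (contIntM hMb hce) (contIntM hMb hcq)] at hsplit
  have hnn : 0 ≤ ∫ x in M, enorm2 (hgradAt Q x z) ^ 2 :=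
    setIntegral_nonneg hM.measurableSet (fun x _ => sq_nonneg _)
  linarith

lemma vertical_decay (hM : IsOpen M) (hMb : Bornology.IsBounded M)
    (hQ : ContDiff ℝ (⊤:ℕ∞) Q) {β Rt₄ : ℝ} (hβ : 0 < β) (hRt₄ : 0 < Rt₄)
    (htop : ∀ xy ∈ M, (1/Rt₄) * dzAt Q (xy,1) + β * Q (xy,1) = 0)
    (hbot : ∀ xy ∈ M, dzAt Q (xy,0) = 0) :
    (1/Rt₄) * (∫ p in M ×ˢ Ioo (0:ℝ) 1, Q p * dzzAt Q p)
      ≤ -((1/(2*Rt₄+2/β)) * ∫ p in M ×ˢ Ioo (0:ℝ) 1, (Q p)^2) := by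
  have hc1 : Continuous (fun p : (ℝ×ℝ)×ℝ => Q p * dzzAt Q p) :=
    hQ.continuous.mul (continuous_dzzAt hQ)
  have hc2 : Continuous (fun p : (ℝ×ℝ)×ℝ => (Q p)^2) := hQ.continuous.pow 2
  have hfub1 : (∫ p in M ×ˢ Ioo (0:ℝ) 1, Q p * dzzAt Q p)
      = ∫ x in M, ∫ z in Ioo (0:ℝ) 1, Q (x,z) * dzzAt Q (x,z) :=
    fubini_xz (contIntO hMb hc1)
  have hfub2 : (∫ p in M ×ˢ Ioo (0:ℝ) 1, (Q p)^2)
      = ∫ x in M, ∫ z in Ioo (0:ℝ) 1, (Q (x,z))^2 :=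
    fubini_xz (contIntO hMb hc2)
  rw [hfub1, hfub2, ← integral_const_mul, ← integral_const_mul, ← integral_neg]
  apply setIntegral_mono_on
  · exact (marginal_x (contIntO hMb hc1)).const_mul _
  · exact ((marginal_x (contIntO hMb hc2)).const_mul _).neg
  · exact hM.measurableSet
  · intro x hx
    have h := oneD_decay (fun z => Q (x,z))
      (hQ.comp (contDiff_const.prodMk contDiff_id)) β Rt₄ hβ hRt₄ (htop x hx) (hbot x hx)
    rw [Ioo_int, Ioo_int]
    exact h
end Diffusion



set_option maxHeartbeats 4000000 in
/-- Exponential decay of the moisture `L²` norm: the mixing ratio component `q` of any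
strong solution of the moist primitive equations satisfies
`‖q(t)‖₂² ≤ ‖q₀‖₂² exp(−t/(2Rt₄ + 2/β)) + (2Rt₄ + 2/β)² ‖Q₂‖₂²` for all `t ≥ 0`. -/
theorem moisture_L2_exponential_decay (M : Set (ℝ × ℝ)) (hM : IsOpen M)
    (hMb : Bornology.IsBounded M)
    (a b P p₀ fc Ro Re₁ Re₂ Rt₁ Rt₂ Rt₃ Rt₄ α β : ℝ)
    (ha : 0 < a) (hb : 0 < b) (hp₀ : 0 < p₀) (hP : p₀ ≤ P)
    (hRe₁ : 0 < Re₁) (hRe₂ : 0 < Re₂) (hRt₁ : 0 < Rt₁) (hRt₂ : 0 < Rt₂)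
    (hRt₃ : 0 < Rt₃) (hRt₄ : 0 < Rt₄) (hα : 0 < α) (hβ : 0 < β)
    (Q₁ Q₂ : (ℝ × ℝ) × ℝ → ℝ)
    (hQ₂ : MemLp Q₂ 2 (volume.restrict (M ×ˢ Ioo (0 : ℝ) 1)))
    (v : ℝ → (ℝ × ℝ) × ℝ → ℝ × ℝ) (T q : ℝ → (ℝ × ℝ) × ℝ → ℝ)
    (Φs : ℝ → ℝ × ℝ → ℝ)
    (hsol : IsPEStrongSolution M a b P p₀ fc Ro Re₁ Re₂ Rt₁ Rt₂ Rt₃ Rt₄ α β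
      Q₁ Q₂ v T q Φs) :
    ∀ t ≥ (0 : ℝ),
      (∫ p in M ×ˢ Ioo (0 : ℝ) 1, (q t p) ^ 2) ≤
        (∫ p in M ×ˢ Ioo (0 : ℝ) 1, (q 0 p) ^ 2) *
            Real.exp (-t / (2 * Rt₄ + 2 / β)) +
          (2 * Rt₄ + 2 / β) ^ 2 * ∫ p in M ×ˢ Ioo (0 : ℝ) 1, (Q₂ p) ^ 2 := by
  intro t ht
  have hmeas : MeasurableSet (M ×ˢ Ioo (0:ℝ) 1) := hM.measurableSet.prod measurableSet_Ioo
  have hF : ContDiff ℝ (⊤:ℕ∞) (fun tp : ℝ × ((ℝ×ℝ)×ℝ) => q tp.1 tp.2) :=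
    hsol.smooth_q.of_le (mod_cast le_top)
  set qt : ℝ → ((ℝ×ℝ)×ℝ) → ℝ :=
    fun s p => fderiv ℝ (fun tp : ℝ × ((ℝ×ℝ)×ℝ) => q tp.1 tp.2) (s, p) (1, 0) with hqtdef
  set E : ℝ → ℝ := fun s => ∫ p in M ×ˢ Ioo (0:ℝ) 1, (q s p)^2 with hEdef
  set D : ℝ → ℝ := fun s => ∫ p in M ×ˢ Ioo (0:ℝ) 1, 2 * q s p * qt s p with hDdef
  have hqsm : ∀ s : ℝ, ContDiff ℝ (⊤:ℕ∞) (q s) :=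
    fun s => hF.comp (contDiff_const.prodMk contDiff_id)
  have hqcont : ∀ s : ℝ, Continuous (q s) := fun s => (hqsm s).continuous
  have hvsm : ∀ s : ℝ, ContDiff ℝ (⊤:ℕ∞) (v s) :=
    fun s => (hsol.smooth_v.of_le (mod_cast le_top)).comp (contDiff_const.prodMk contDiff_id)
  have hqtcont : Continuous (fun up : ℝ × ((ℝ×ℝ)×ℝ) =>
      fderiv ℝ (fun tp : ℝ × ((ℝ×ℝ)×ℝ) => q tp.1 tp.2) up (1, 0)) :=
    (contDiff_fderiv_apply hF _).continuous
  -- the derivative of E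
  have hasE : ∀ s : ℝ, HasDerivAt E (D s) s := by
    intro s
    have hψ : Continuous (fun up : ℝ × ((ℝ×ℝ)×ℝ) =>
        2 * q up.1 up.2 * fderiv ℝ (fun tp : ℝ × ((ℝ×ℝ)×ℝ) => q tp.1 tp.2) up (1, 0)) :=
      (continuous_const.mul hF.continuous).mul hqtcont
    obtain ⟨C, hC⟩ := ((isCompact_closedBall s 1).prod
      (boundedO hMb).isCompact_closure).exists_bound_of_continuousOn hψ.continuousOn
    have key := hasDerivAt_integral_of_dominated_loc_of_deriv_le
      (μ := volume.restrict (M ×ˢ Ioo (0:ℝ) 1))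
      (F := fun u (p : (ℝ×ℝ)×ℝ) => (q u p)^2)
      (F' := fun u (p : (ℝ×ℝ)×ℝ) => 2 * q u p * qt u p)
      (x₀ := s) (bound := fun _ => C) (s := Metric.ball s 1) (Metric.ball_mem_nhds s one_pos)
      (Filter.Eventually.of_forall (fun u =>
        (((hqcont u).pow 2).aestronglyMeasurable)))
      (contIntO hMb ((hqcont s).pow 2))
      (((continuous_const.mul (hqcont s)).mul
        (hqtcont.comp (Continuous.prodMk_right s))).aestronglyMeasurable)
      ?_ (integrableOn_const (volO_lt hMb).ne) ?_
    · exact key.2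
    · apply (ae_restrict_iff' hmeas).2
      apply Filter.Eventually.of_forall
      intro p hp u hu
      exact hC (u, p) ⟨Metric.ball_subset_closedBall hu, subset_closure hp⟩
    · apply Filter.Eventually.of_forall
      intro p u hu
      have h := hasDerivAt_slice_left (f := fun tp : ℝ × ((ℝ×ℝ)×ℝ) => q tp.1 tp.2)
        hF.diff' p u
      have h2 := h.fun_pow 2
      simpa [pow_one] using h2
  -- constants
  set c : ℝ := 2 * Rt₄ + 2 / β with hcdef
  have hc : 0 < c := by rw [hcdef]; positivity
  set lam : ℝ := 1 / c with hlamdef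
  have hlampos : 0 < lam := by rw [hlamdef]; positivity
  set C₂ : ℝ := ∫ p in M ×ˢ Ioo (0:ℝ) 1, (Q₂ p)^2 with hC₂def
  have hC₂nn : 0 ≤ C₂ := setIntegral_nonneg hmeas (fun p _ => sq_nonneg _)
  set K : ℝ := c * C₂ with hKdef
  have hKnn : 0 ≤ K := mul_nonneg hc.le hC₂nn
  haveI : IsFiniteMeasure (volume.restrict (M ×ˢ Ioo (0:ℝ) 1)) :=
    ⟨by rw [Measure.restrict_apply_univ]; exact volO_lt hMb⟩
  -- the key differential inequality
  have hkey : ∀ s : ℝ, D s ≤ -lam * E s + K := by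
    intro s
    have hQ₂int : Integrable Q₂ (volume.restrict (M ×ˢ Ioo (0:ℝ) 1)) :=
      hQ₂.integrable (by norm_num)
    have hQ₂sq : Integrable (fun p => (Q₂ p)^2) (volume.restrict (M ×ˢ Ioo (0:ℝ) 1)) :=
      hQ₂.integrable_sq
    have hcT : Continuous (fun p : (ℝ×ℝ)×ℝ =>
        q s p * (dot2 (hgradAt (q s) p.1 p.2) (v s p) + wAt (v s) p * dzAt (q s) p)) := by
      apply (hqcont s).mul
      apply Continuous.add
      · exact ((continuous_fst.comp (continuous_hgradAt (hqsm s))).mul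
          (continuous_fst.comp (hvsm s).continuous)).add
          ((continuous_snd.comp (continuous_hgradAt (hqsm s))).mul
          (continuous_snd.comp (hvsm s).continuous))
      · exact (continuous_wAt (hvsm s)).mul (continuous_dzAt (hqsm s))
    have hcL : Continuous (fun p : (ℝ×ℝ)×ℝ => q s p * hlapAt (q s) p.1 p.2) :=
      (hqcont s).mul (continuous_hlapAt (hqsm s))
    have hcZ : Continuous (fun p : (ℝ×ℝ)×ℝ => q s p * dzzAt (q s) p) :=
      (hqcont s).mul (continuous_dzzAt (hqsm s))
    have hTint := contIntO (M := M) hMb hcT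
    have hLint := contIntO (M := M) hMb hcL
    have hZint := contIntO (M := M) hMb hcZ
    obtain ⟨Cq, hCq⟩ := (boundedO (M := M) hMb).isCompact_closure.exists_bound_of_continuousOn
      ((continuous_const.mul (hqcont s)).continuousOn
        : ContinuousOn (fun p : (ℝ×ℝ)×ℝ => 2 * q s p) _)
    have hf₁int : Integrable (fun p => 2 * q s p * Q₂ p)
        (volume.restrict (M ×ˢ Ioo (0:ℝ) 1)) := by
      apply hQ₂int.bdd_mul ((continuous_const.mul (hqcont s)).aestronglyMeasurable)
      apply (ae_restrict_iff' hmeas).2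
      exact Filter.Eventually.of_forall (fun p hp => hCq p (subset_closure hp))
    -- pointwise substitution of the moisture equation
    have hDeq : D s = (∫ p in M ×ˢ Ioo (0:ℝ) 1, 2 * q s p * Q₂ p)
        + ((-2) * ∫ p in M ×ˢ Ioo (0:ℝ) 1,
            q s p * (dot2 (hgradAt (q s) p.1 p.2) (v s p) + wAt (v s) p * dzAt (q s) p))
        + ((2/Rt₃) * ∫ p in M ×ˢ Ioo (0:ℝ) 1, q s p * hlapAt (q s) p.1 p.2)
        + ((2/Rt₄) * ∫ p in M ×ˢ Ioo (0:ℝ) 1, q s p * dzzAt (q s) p) := by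
      have hptw : ∀ p ∈ M ×ˢ Ioo (0:ℝ) 1,
          2 * q s p * qt s p = 2 * q s p * Q₂ p
            + (-2) * (q s p * (dot2 (hgradAt (q s) p.1 p.2) (v s p)
                + wAt (v s) p * dzAt (q s) p))
            + (2/Rt₃) * (q s p * hlapAt (q s) p.1 p.2)
            + (2/Rt₄) * (q s p * dzzAt (q s) p) := by
        intro p hp
        have hm := hsol.moisture s p hp
        have hqt : qt s p = deriv (fun s' : ℝ => q s' p) s :=
          ((hasDerivAt_slice_left (f := fun tp : ℝ × ((ℝ×ℝ)×ℝ) => q tp.1 tp.2)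
            hF.diff' p s).deriv).symm
        have hsub : qt s p = Q₂ p - dot2 (hgradAt (q s) p.1 p.2) (v s p)
            - wAt (v s) p * dzAt (q s) p + (1/Rt₃) * hlapAt (q s) p.1 p.2
            + (1/Rt₄) * dzzAt (q s) p := by
          rw [hqt]; linarith [hm]
        rw [hsub]; field_simp; ring
      have i1 : Integrable (fun p => (-2) * (q s p * (dot2 (hgradAt (q s) p.1 p.2) (v s p)
          + wAt (v s) p * dzAt (q s) p))) (volume.restrict (M ×ˢ Ioo (0:ℝ) 1)) :=
        hTint.const_mul _
      have i2 : Integrable (fun p => (2/Rt₃) * (q s p * hlapAt (q s) p.1 p.2))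
          (volume.restrict (M ×ˢ Ioo (0:ℝ) 1)) := hLint.const_mul _
      have i3 : Integrable (fun p => (2/Rt₄) * (q s p * dzzAt (q s) p))
          (volume.restrict (M ×ˢ Ioo (0:ℝ) 1)) := hZint.const_mul _
      have i12 : Integrable (fun p : (ℝ×ℝ)×ℝ => 2 * q s p * Q₂ p
          + (-2) * (q s p * (dot2 (hgradAt (q s) p.1 p.2) (v s p)
              + wAt (v s) p * dzAt (q s) p)))
          (volume.restrict (M ×ˢ Ioo (0:ℝ) 1)) := hf₁int.add i1
      have i123 : Integrable (fun p : (ℝ×ℝ)×ℝ => 2 * q s p * Q₂ p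
          + (-2) * (q s p * (dot2 (hgradAt (q s) p.1 p.2) (v s p)
              + wAt (v s) p * dzAt (q s) p))
          + (2/Rt₃) * (q s p * hlapAt (q s) p.1 p.2))
          (volume.restrict (M ×ˢ Ioo (0:ℝ) 1)) := i12.add i2
      calc D s = ∫ p in M ×ˢ Ioo (0:ℝ) 1,
          (2 * q s p * Q₂ p
            + (-2) * (q s p * (dot2 (hgradAt (q s) p.1 p.2) (v s p)
                + wAt (v s) p * dzAt (q s) p))
            + (2/Rt₃) * (q s p * hlapAt (q s) p.1 p.2)
            + (2/Rt₄) * (q s p * dzzAt (q s) p)) :=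
            setIntegral_congr_fun hmeas (fun p hp => hptw p hp)
        _ = _ := by
            rw [integral_add i123 i3,
              integral_add i12 i2, integral_add hf₁int i1,
              integral_const_mul, integral_const_mul, integral_const_mul]
    -- transport term vanishes
    have htrans : (∫ p in M ×ˢ Ioo (0:ℝ) 1,
        q s p * (dot2 (hgradAt (q s) p.1 p.2) (v s p) + wAt (v s) p * dzAt (q s) p)) = 0 :=
      transport_zero hM hMb (hqsm s) (hvsm s)
        (fun φ z hφ => hsol.lat_v_tangent s z φ hφ)
        (fun xy hxy => hsol.baro s xy hxy)
    -- horizontal diffusion is dissipative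
    have hlap : (∫ p in M ×ˢ Ioo (0:ℝ) 1, q s p * hlapAt (q s) p.1 p.2) ≤ 0 :=
      hlap_nonpos hM hMb (hqsm s) (fun φ z hφ => hsol.lat_q_neumann s z φ hφ)
    -- vertical diffusion + boundary condition
    have hvert : (1/Rt₄) * (∫ p in M ×ˢ Ioo (0:ℝ) 1, q s p * dzzAt (q s) p)
        ≤ -((1/(2*Rt₄+2/β)) * ∫ p in M ×ˢ Ioo (0:ℝ) 1, (q s p)^2) :=
      vertical_decay hM hMb (hqsm s) hβ hRt₄
        (fun xy hxy => hsol.bc_q_top s xy hxy) (fun xy hxy => hsol.bc_q_bot s xy hxy)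
    -- Cauchy–Schwarz/Young for the source term
    have h1c : c * (1/c) = 1 := by field_simp
    have hCS : (∫ p in M ×ˢ Ioo (0:ℝ) 1, 2 * q s p * Q₂ p)
        ≤ lam * E s + c * C₂ := by
      have hrhs : Integrable (fun p => lam * (q s p)^2 + c * (Q₂ p)^2)
          (volume.restrict (M ×ˢ Ioo (0:ℝ) 1)) :=
        ((contIntO hMb ((hqcont s).pow 2)).const_mul _).add (hQ₂sq.const_mul _)
      have hptw : ∀ p : (ℝ×ℝ)×ℝ,
          2 * q s p * Q₂ p ≤ lam * (q s p)^2 + c * (Q₂ p)^2 := by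
        intro p
        have hsq := sq_nonneg (q s p - c * Q₂ p)
        have hlc : lam * c = 1 := by rw [hlamdef]; field_simp
        nlinarith [mul_pos hc hc, hc, sq_nonneg (q s p - c * Q₂ p),
          mul_le_mul_of_nonneg_left hsq hlampos.le]
      calc (∫ p in M ×ˢ Ioo (0:ℝ) 1, 2 * q s p * Q₂ p)
          ≤ ∫ p in M ×ˢ Ioo (0:ℝ) 1, (lam * (q s p)^2 + c * (Q₂ p)^2) :=
            integral_mono hf₁int hrhs hptw
        _ = lam * E s + c * C₂ := by
            rw [integral_add ((contIntO hMb ((hqcont s).fun_pow 2)).const_mul _)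
              (hQ₂sq.const_mul _), integral_const_mul, integral_const_mul]
    have hlap2 : (2/Rt₃) * (∫ p in M ×ˢ Ioo (0:ℝ) 1, q s p * hlapAt (q s) p.1 p.2) ≤ 0 := by
      have h2R : (0:ℝ) ≤ 2/Rt₃ := by positivity
      exact mul_nonpos_of_nonneg_of_nonpos h2R hlap
    rw [hDeq, htrans]
    have hvert2 : (2/Rt₄) * (∫ p in M ×ˢ Ioo (0:ℝ) 1, q s p * dzzAt (q s) p)
        ≤ -(2 * lam * E s) := by
      have h := hvert
      rw [hEdef]
      have hee : (1/(2*Rt₄+2/β)) = lam := by rw [hlamdef, hcdef]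
      rw [hee] at h
      have := mul_le_mul_of_nonneg_left h (by norm_num : (0:ℝ) ≤ 2)
      calc (2/Rt₄) * (∫ p in M ×ˢ Ioo (0:ℝ) 1, q s p * dzzAt (q s) p)
          = 2 * ((1/Rt₄) * (∫ p in M ×ˢ Ioo (0:ℝ) 1, q s p * dzzAt (q s) p)) := by ring
        _ ≤ 2 * (-(lam * ∫ p in M ×ˢ Ioo (0:ℝ) 1, (q s p)^2)) := this
        _ = -(2 * lam * ∫ p in M ×ˢ Ioo (0:ℝ) 1, (q s p)^2) := by ring
    rw [hKdef]
    have hEs : E s = ∫ p in M ×ˢ Ioo (0:ℝ) 1, (q s p)^2 := rfl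
    rw [hEs] at hCS hvert2 ⊢
    ring_nf at hCS hlap2 hvert2 ⊢
    have hX1 : (∫ p in M ×ˢ Ioo (0:ℝ) 1, q s p * Q₂ p * 2)
        = ∫ p in M ×ˢ Ioo (0:ℝ) 1, 2 * q s p * Q₂ p := by
      apply integral_congr_ae
      exact Filter.Eventually.of_forall (fun p => by ring)
    rw [hX1] at hCS
    linarith [hCS, hlap2, hvert2]
  -- Gronwall
  have hgron := gronwall_decay hlampos hKnn hasE hkey t ht
  have hexp : Real.exp (-t / c) = Real.exp (-(lam * t)) := by
    congr 1
    rw [hlamdef]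
    ring
  have hKl : K / lam = c^2 * C₂ := by
    rw [hKdef, hlamdef]
    field_simp
  calc (∫ p in M ×ˢ Ioo (0:ℝ) 1, (q t p)^2) = E t := rfl
    _ ≤ E 0 * Real.exp (-(lam * t)) + K / lam := hgron
    _ = (∫ p in M ×ˢ Ioo (0:ℝ) 1, (q 0 p)^2) * Real.exp (-t / c) + c^2 * C₂ := by
        rw [hexp, hKl]
    _ = _ := by rw [hcdef, hC₂def]
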